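/- Let h : ℝ → ℝ be twice differentiable and p₁, p₂ > 0. If h(0) ≥ 0, ḣ(0) + p₁h(0) ≥ 0, and ḧ(t) + (p₁ + p₂)ḣ(t) + p₁p₂h(t) ≥ 0 for all t ≥ 0, then h(t) ≥ 0 for all t ≥ 0. -/

import Mathlib

/-!
Multiplying by the integrating factor `exp (p t)` turns `f' + p f ≥ 0` into monotonicity of
`exp (p t) * f t`, so `f ≥ 0` propagates forward from `f a ≥ 0`. The characteristic operator
factors as `(d/dt + p₂)(d/dt + p₁)`, so this comparison is applied first to
`ν₁ = ḣ + p₁ h` with rate `p₂`, and then to `h` with rate `p₁`.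
-/

open Real Set

lemma hasDerivAt_exp_mul_mul {f : ℝ → ℝ} {f' : ℝ} (p t : ℝ) (hf : HasDerivAt f f' t) :
    HasDerivAt (fun s => exp (p * s) * f s) (exp (p * t) * (f' + p * f t)) t := by
  have hexp : HasDerivAt (fun s => exp (p * s)) (exp (p * t) * p) t :=
    ((hasDerivAt_id t).const_mul p).exp.congr_deriv (by simp)
  exact (hexp.mul hf).congr_deriv (by ring)

lemma nonneg_of_deriv_add_mul_nonneg {f : ℝ → ℝ} {a : ℝ} (p : ℝ) (hf : Differentiable ℝ f)
    (ha : 0 ≤ f a) (hc : ∀ t, a ≤ t → 0 ≤ deriv f t + p * f t) :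
    ∀ t, a ≤ t → 0 ≤ f t := by
  set g : ℝ → ℝ := fun s => exp (p * s) * f s
  have hg : ∀ t, HasDerivAt g (exp (p * t) * (deriv f t + p * f t)) t :=
    fun t => hasDerivAt_exp_mul_mul p t (hf t).hasDerivAt
  have hmono : MonotoneOn g (Ici a) := by
    refine monotoneOn_of_hasDerivWithinAt_nonneg (convex_Ici a)
      (fun t _ => (hg t).continuousAt.continuousWithinAt) (fun t _ => (hg t).hasDerivWithinAt) ?_
    rw [interior_Ici]
    exact fun t ht => mul_nonneg (exp_nonneg _) (hc t (le_of_lt ht))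
  intro t ht
  have hgt : 0 ≤ g t :=
    (mul_nonneg (exp_nonneg _) ha).trans (hmono self_mem_Ici ht ht)
  exact nonneg_of_mul_nonneg_right hgt (exp_pos _)

theorem second_order_ecbf_invariance_general
    (h : ℝ → ℝ) (p₁ p₂ : ℝ)
    (hdiff : Differentiable ℝ h) (hdiff' : Differentiable ℝ (deriv h))
    (h0 : h 0 ≥ 0) (h1 : deriv h 0 + p₁ * h 0 ≥ 0)
    (hcond : ∀ t : ℝ, 0 ≤ t →
      deriv (deriv h) t + (p₁ + p₂) * deriv h t + p₁ * p₂ * h t ≥ 0) :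
    ∀ t : ℝ, 0 ≤ t → h t ≥ 0 := by
  set ν : ℝ → ℝ := fun t => deriv h t + p₁ * h t
  have hν : ∀ t, HasDerivAt ν (deriv (deriv h) t + p₁ * deriv h t) t :=
    fun t => (hdiff' t).hasDerivAt.add ((hdiff t).hasDerivAt.const_mul p₁)
  have hν_nonneg : ∀ t, 0 ≤ t → 0 ≤ ν t := by
    refine nonneg_of_deriv_add_mul_nonneg p₂ (fun t => (hν t).differentiableAt) h1 ?_
    intro t ht
    rw [(hν t).deriv]
    linarith [hcond t ht]
  exact nonneg_of_deriv_add_mul_nonneg p₁ hdiff h0 hν_nonneg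

theorem second_order_ecbf_invariance
    (h : ℝ → ℝ) (p₁ p₂ : ℝ)
    (hdiff : Differentiable ℝ h) (hdiff' : Differentiable ℝ (deriv h))
    (hp₁ : 0 < p₁) (hp₂ : 0 < p₂)
    (h0 : h 0 ≥ 0) (h1 : deriv h 0 + p₁ * h 0 ≥ 0)
    (hcond : ∀ t : ℝ, 0 ≤ t →
      deriv (deriv h) t + (p₁ + p₂) * deriv h t + p₁ * p₂ * h t ≥ 0) :
    ∀ t : ℝ, 0 ≤ t → h t ≥ 0 :=
  second_order_ecbf_invariance_general h p₁ p₂ hdiff hdiff' h0 h1 hcond
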